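/- Assume f₁(x) = ∑_{m≥0} b_m x^m converges on [−1,1] with c₂ r^m ≤ b_m ≤ c₁ r^m for all m ≥ 0, where 0 < r < 1 and 0 < c₂ ≤ c₁, and that g(t) = ∑_{q≥0} a_q t^q is a polynomial of degree D ≥ 1 with a_q ≥ 0. Set d* := min(D, n), and for λ > 0 let E^λ be the set of tuples ((k₁,l₁),…,(kₙ,lₙ)) with k_i ∈ ℕ, 1 ≤ l_i ≤ α_{k_i,d}, and μ_{(k₁,…,kₙ)} ≥ λ. Then there exist constants C, C', c, c', λ₀ > 0 such that for all 0 < λ ≤ λ₀ the set E^λ is finite and c·(log(c'/λ))^{(d−1)d*} ≤ |E^λ| ≤ C·(log(C'/λ))^{(d−1)d*}. -/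

import Mathlib

open scoped BigOperators

/-- `powCoef b α m` is the `m`-th Taylor coefficient at `0` of `f₁^α`, where
`f₁(x) = ∑_{m≥0} b m * x^m` (α-fold Cauchy product). -/
def powCoef (b : ℕ → ℝ) (α m : ℕ) : ℝ :=
  ∑ t ∈ Finset.Nat.antidiagonalTuple α m, ∏ i, b (t i)

/-- The surface area of the unit sphere `S^{d-1} ⊆ ℝ^d`, i.e. `2 π^{d/2} / Γ(d/2)`. -/
noncomputable def unitSphereArea (d : ℕ) : ℝ :=
  2 * Real.pi ^ ((d : ℝ) / 2) / Real.Gamma ((d : ℝ) / 2)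

/-- The eigenvalue `λ_{k,α}` associated with the dot-product kernel `f₁^α` on `S^{d-1}`. -/
noncomputable def lamCoef (d : ℕ) (b : ℕ → ℝ) (k α : ℕ) : ℝ :=
  unitSphereArea (d - 1) * Real.Gamma (((d : ℝ) - 1) / 2) / 2 ^ (k + 1) *
    ∑' s : ℕ, powCoef b α (2 * s + k) *
      (((2 * s + k).factorial : ℝ) / ((2 * s).factorial : ℝ)) *
      (Real.Gamma ((s : ℝ) + 1 / 2) / Real.Gamma ((s : ℝ) + (k : ℝ) + (d : ℝ) / 2))

/-- `μ_{(k₁,…,kₙ)} := ∑_{q≥0} a_q ∑_{α₁+⋯+αₙ=q} (q!/(α₁!⋯αₙ!)) ∏_i λ_{k_i,α_i}`. -/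
noncomputable def muCoef (d n : ℕ) (b a : ℕ → ℝ) (k : Fin n → ℕ) : ℝ :=
  ∑' q : ℕ, a q * ∑ t ∈ Finset.Nat.antidiagonalTuple n q,
    (Nat.multinomial Finset.univ t : ℝ) * ∏ i, lamCoef d b (k i) (t i)

/-- `α_{m,d}`, the dimension of the space of degree-`m` spherical harmonics in `d` variables. -/
def alphaDim (d m : ℕ) : ℕ :=
  if m = 0 then 1
  else if m = 1 then d
  else Nat.choose (d + m - 1) m - Nat.choose (d + m - 3) (m - 2)

/-- The set `E^λ` of tuples `((k₁,l₁),…,(kₙ,lₙ))` with `1 ≤ l_i ≤ α_{k_i,d}` and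
`μ_{(k₁,…,kₙ)} ≥ λ`. -/
def eigSet (d n : ℕ) (b a : ℕ → ℝ) (lam : ℝ) : Set ((Fin n → ℕ) × (Fin n → ℕ)) :=
  {p | (∀ i, 1 ≤ p.2 i ∧ p.2 i ≤ alphaDim d (p.1 i)) ∧ lam ≤ muCoef d n b a p.1}

/-!
The eigenvalues `λ_{k,α}` decay geometrically in `k`. The `s = 0` term of their series gives
`λ_{k,α} ≥ μ₀ (r/d)^k` for `α ≥ 1`; the bounds `Γ(s + 1/2) ≤ Γ(1/2) s!` and
`Γ(d/2) (s+k)! ≤ Γ(s + k + d/2)` give `λ_{k,α} ≤ Λ (√r)^k`; and `λ_{k,0} = 0` for `k ≠ 0`.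
Consequently `μ_k ≤ B ρ^{∑ kᵢ}`, `μ_k = 0` as soon as more than `D` of the `kᵢ` are nonzero, and a
single multinomial term of degree `D` gives `μ_k ≥ β σ^{∑ kᵢ}` for `k` supported on a fixed set of
`d* = min(D, n)` coordinates. So `E^λ` contains all tuples supported on that set with
`kᵢ ≤ c log(1/λ)`, and is contained in the tuples with at most `d*` nonzero `kᵢ`, all
`kᵢ ≤ C log(1/λ)`. As `∑_{k ≤ K} α_{k,d}` lies between `binom(K+d-1, d-1)` and twice that,
both counts are of order `(log(1/λ))^{(d-1) d*}`.
-/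

open Finset Real
open scoped Nat

lemma Gamma_add_nat_le_mul_factorial {x : ℝ} (hx0 : 0 < x) (hx1 : x ≤ 1) (m : ℕ) :
    Gamma (x + m) ≤ Gamma x * m ! := by
  induction m with
  | zero => simp
  | succ m ih =>
    have hxm : 0 < x + m := by positivity
    rw [Nat.cast_succ, ← add_assoc, Gamma_add_one hxm.ne', Nat.factorial_succ, Nat.cast_mul]
    calc (x + m) * Gamma (x + m) ≤ (m + 1) * (Gamma x * m !) :=
          mul_le_mul (by linarith) ih (Gamma_pos_of_pos hxm).le (by positivity)
      _ = Gamma x * ((m + 1 : ℕ) * m !) := by push_cast; ring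

lemma Gamma_mul_factorial_le_Gamma_add_nat {x : ℝ} (hx : 1 ≤ x) (m : ℕ) :
    Gamma x * m ! ≤ Gamma (x + m) := by
  induction m with
  | zero => simp
  | succ m ih =>
    have hxm : 0 < x + m := by positivity
    rw [Nat.cast_succ, ← add_assoc, Gamma_add_one hxm.ne', Nat.factorial_succ, Nat.cast_mul]
    calc Gamma x * ((m + 1 : ℕ) * m !) = (m + 1) * (Gamma x * m !) := by push_cast; ring
      _ ≤ (x + m) * Gamma (x + m) :=
          mul_le_mul (by linarith) ih (by positivity) hxm.le

lemma Gamma_add_nat_le_pow_mul_factorial {x : ℝ} (hx : 1 ≤ x) (m : ℕ) :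
    Gamma (x + m) ≤ Gamma x * x ^ m * m ! := by
  induction m with
  | zero => simp
  | succ m ih =>
    have hxm : 0 < x + m := by positivity
    rw [Nat.cast_succ, ← add_assoc, Gamma_add_one hxm.ne', Nat.factorial_succ, Nat.cast_mul]
    calc (x + m) * Gamma (x + m) ≤ (x * (m + 1)) * (Gamma x * x ^ m * m !) :=
          mul_le_mul (by nlinarith) ih (Gamma_pos_of_pos hxm).le (by positivity)
      _ = Gamma x * x ^ (m + 1) * ((m + 1 : ℕ) * m !) := by push_cast; ring

lemma factorial_two_mul_add_mul_factorial_le (s k : ℕ) :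
    (2 * s + k)! * s ! ≤ 2 ^ k * (s + k)! * (2 * s)! := by
  induction k with
  | zero => simp [Nat.mul_comm]
  | succ k ih =>
    rw [← add_assoc, ← add_assoc, Nat.factorial_succ, Nat.factorial_succ]
    calc (2 * s + k + 1) * (2 * s + k)! * s ! ≤ 2 * (s + k + 1) * ((2 * s + k)! * s !) := by
          rw [mul_assoc]; gcongr; omega
      _ ≤ 2 * (s + k + 1) * (2 ^ k * (s + k)! * (2 * s)!) := by gcongr
      _ = 2 ^ (k + 1) * ((s + k + 1) * (s + k)!) * (2 * s)! := by ring

lemma powCoef_nonneg {b : ℕ → ℝ} (hb : ∀ m, 0 ≤ b m) (α m : ℕ) : 0 ≤ powCoef b α m :=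
  sum_nonneg fun _ _ => prod_nonneg fun _ _ => hb _

lemma powCoef_zero_left (b : ℕ → ℝ) (m : ℕ) : powCoef b 0 m = if m = 0 then 1 else 0 := by
  cases m <;> simp [powCoef]

lemma le_of_mem_antidiagonalTuple {n q : ℕ} {t : Fin n → ℕ} (ht : t ∈ Nat.antidiagonalTuple n q)
    (i : Fin n) : t i ≤ q :=
  Nat.mem_antidiagonalTuple.1 ht ▸ single_le_sum (fun j _ => Nat.zero_le (t j)) (mem_univ i)

lemma card_antidiagonalTuple_le (α m : ℕ) : #(Nat.antidiagonalTuple α m) ≤ (m + 1) ^ α := by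
  have hsub : Nat.antidiagonalTuple α m ⊆ Fintype.piFinset fun _ => range (m + 1) :=
    fun t ht => Fintype.mem_piFinset.2 fun i =>
      mem_range.2 (Nat.lt_succ_of_le (le_of_mem_antidiagonalTuple ht i))
  simpa using card_le_card hsub

lemma powCoef_le {b : ℕ → ℝ} {c r : ℝ} (hr : 0 ≤ r) (hb0 : ∀ m, 0 ≤ b m)
    (hb : ∀ m, b m ≤ c * r ^ m) (α m : ℕ) :
    powCoef b α m ≤ (m + 1) ^ α * (c ^ α * r ^ m) := by
  have hprod : ∀ t ∈ Nat.antidiagonalTuple α m, ∏ i, b (t i) ≤ c ^ α * r ^ m := by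
    intro t ht
    calc ∏ i, b (t i) ≤ ∏ i, c * r ^ t i := prod_le_prod (fun i _ => hb0 _) fun i _ => hb _
      _ = c ^ α * r ^ m := by
          rw [prod_mul_distrib, prod_const, prod_pow_eq_pow_sum, Nat.mem_antidiagonalTuple.1 ht]
          simp
  have hcard : (#(Nat.antidiagonalTuple α m) : ℝ) ≤ (m + 1) ^ α := by
    exact_mod_cast card_antidiagonalTuple_le α m
  calc powCoef b α m ≤ #(Nat.antidiagonalTuple α m) • (c ^ α * r ^ m) :=
        sum_le_card_nsmul _ _ _ hprod
    _ ≤ (m + 1) ^ α * (c ^ α * r ^ m) := by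
        have hc : 0 ≤ c := (hb0 0).trans (by simpa using hb 0)
        rw [nsmul_eq_mul]
        gcongr

lemma powCoef_ge {b : ℕ → ℝ} {c r : ℝ} (hc : 0 ≤ c) (hr : 0 ≤ r) (hb : ∀ m, c * r ^ m ≤ b m)
    {α : ℕ} (hα : α ≠ 0) (m : ℕ) : c ^ α * r ^ m ≤ powCoef b α m := by
  have hb0 : ∀ m, 0 ≤ b m := fun m => (by positivity : 0 ≤ c * r ^ m).trans (hb m)
  set t : Fin α → ℕ := Pi.single ⟨0, Nat.pos_of_ne_zero hα⟩ m
  have ht : t ∈ Nat.antidiagonalTuple α m := by simp [t, Nat.mem_antidiagonalTuple]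
  calc c ^ α * r ^ m = ∏ i, c * r ^ t i := by
        rw [prod_mul_distrib, prod_const, prod_pow_eq_pow_sum, Nat.mem_antidiagonalTuple.1 ht]
        simp
    _ ≤ ∏ i, b (t i) := prod_le_prod (fun i _ => by positivity) fun i _ => hb _
    _ ≤ powCoef b α m :=
        single_le_sum (f := fun t : Fin α → ℕ => ∏ i, b (t i))
          (fun _ _ => prod_nonneg fun _ _ => hb0 _) ht

lemma exists_add_one_pow_mul_pow_le (e : ℕ) {x : ℝ} (hx0 : 0 < x) (hx1 : x < 1) :
    ∃ M, ∀ m : ℕ, ((m : ℝ) + 1) ^ e * x ^ m ≤ M := by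
  have h := ((tendsto_pow_const_mul_const_pow_of_abs_lt_one e
    (by rwa [abs_of_pos hx0])).comp (Filter.tendsto_add_atTop_nat 1)).div_const x
  obtain ⟨M, hM⟩ := h.bddAbove_range
  refine ⟨M, fun m => le_trans (le_of_eq ?_) (hM ⟨m, rfl⟩)⟩
  simp only [Function.comp_apply]
  field_simp
  push_cast
  ring

lemma exists_powCoef_le_mul_sqrt_pow {b : ℕ → ℝ} {c r : ℝ} (hr0 : 0 < r) (hr1 : r < 1)
    (hb0 : ∀ m, 0 ≤ b m) (hb : ∀ m, b m ≤ c * r ^ m) (α : ℕ) :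
    ∃ A, ∀ m, powCoef b α m ≤ A * √r ^ m := by
  have hc : 0 ≤ c := (hb0 0).trans (by simpa using hb 0)
  obtain ⟨M, hM⟩ := exists_add_one_pow_mul_pow_le α (sqrt_pos.2 hr0)
    ((sqrt_lt' one_pos).2 (by simpa using hr1))
  refine ⟨c ^ α * M, fun m => ?_⟩
  calc powCoef b α m ≤ (m + 1) ^ α * (c ^ α * r ^ m) := powCoef_le hr0.le hb0 hb α m
    _ = c ^ α * (((m : ℝ) + 1) ^ α * √r ^ m) * √r ^ m := by
        nth_rw 1 [← sq_sqrt hr0.le]; ring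
    _ ≤ c ^ α * M * √r ^ m := by gcongr; exact hM m

noncomputable def lamPrefactor (d : ℕ) : ℝ :=
  unitSphereArea (d - 1) * Gamma (((d : ℝ) - 1) / 2)

noncomputable def lamTerm (d : ℕ) (b : ℕ → ℝ) (k α s : ℕ) : ℝ :=
  powCoef b α (2 * s + k) * (((2 * s + k)! : ℝ) / ((2 * s)! : ℝ)) *
    (Gamma ((s : ℝ) + 1 / 2) / Gamma ((s : ℝ) + (k : ℝ) + (d : ℝ) / 2))

noncomputable def gammaRatio (d : ℕ) : ℝ :=
  Gamma (1 / 2) / Gamma ((d : ℝ) / 2)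

lemma lamCoef_eq (d : ℕ) (b : ℕ → ℝ) (k α : ℕ) :
    lamCoef d b k α = lamPrefactor d / 2 ^ (k + 1) * ∑' s, lamTerm d b k α s := rfl

section lamCoef

variable {d : ℕ} {b : ℕ → ℝ}

lemma lamPrefactor_pos (hd : 2 ≤ d) : 0 < lamPrefactor d := by
  have hd' : (1 : ℝ) ≤ ((d - 1 : ℕ) : ℝ) := by exact_mod_cast (by omega : 1 ≤ d - 1)
  have hdR : (2 : ℝ) ≤ d := by exact_mod_cast hd
  have := Gamma_pos_of_pos (by linarith : (0 : ℝ) < ((d - 1 : ℕ) : ℝ) / 2)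
  have := Gamma_pos_of_pos (by linarith : (0 : ℝ) < ((d : ℝ) - 1) / 2)
  unfold lamPrefactor unitSphereArea
  positivity

lemma gammaRatio_pos (hd : 2 ≤ d) : 0 < gammaRatio d :=
  div_pos (Gamma_pos_of_pos (by norm_num)) (Gamma_pos_of_pos (by positivity))

lemma lamTerm_nonneg (hb0 : ∀ m, 0 ≤ b m) (k α s : ℕ) : 0 ≤ lamTerm d b k α s := by
  have := powCoef_nonneg hb0 α (2 * s + k)
  have := Gamma_nonneg_of_nonneg (by positivity : (0 : ℝ) ≤ (s : ℝ) + 1 / 2)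
  have := Gamma_nonneg_of_nonneg (by positivity : (0 : ℝ) ≤ (s : ℝ) + (k : ℝ) + (d : ℝ) / 2)
  unfold lamTerm
  positivity

lemma lamCoef_nonneg (hd : 2 ≤ d) (hb0 : ∀ m, 0 ≤ b m) (k α : ℕ) : 0 ≤ lamCoef d b k α := by
  have := lamPrefactor_pos hd
  rw [lamCoef_eq]
  exact mul_nonneg (by positivity) (tsum_nonneg (lamTerm_nonneg hb0 k α))

lemma lamCoef_zero_right (b : ℕ → ℝ) {k : ℕ} (hk : k ≠ 0) : lamCoef d b k 0 = 0 := by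
  simp [lamCoef_eq, lamTerm, powCoef_zero_left, hk]

lemma lamCoef_zero_zero_pos (hd : 2 ≤ d) (b : ℕ → ℝ) : 0 < lamCoef d b 0 0 := by
  have h0 : ∑' s, lamTerm d b 0 0 s = gammaRatio d := by
    rw [tsum_eq_single 0 fun s hs => by simp [lamTerm, powCoef_zero_left, hs]]
    simp [lamTerm, powCoef_zero_left, gammaRatio]
  rw [lamCoef_eq, h0]
  have := lamPrefactor_pos hd
  have := gammaRatio_pos hd
  positivity

lemma lamTerm_le (hd : 2 ≤ d) (hb0 : ∀ m, 0 ≤ b m) (k α s : ℕ) :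
    lamTerm d b k α s ≤ 2 ^ k * gammaRatio d * powCoef b α (2 * s + k) := by
  have hd2 : (1 : ℝ) ≤ (d : ℝ) / 2 := by
    rw [le_div_iff₀ two_pos]; exact_mod_cast (by omega : 1 * 2 ≤ d)
  have hGd := Gamma_pos_of_pos (by linarith : (0 : ℝ) < (d : ℝ) / 2)
  have hfact : ((2 * s + k)! : ℝ) / (2 * s)! ≤ 2 ^ k * (s + k)! / s ! := by
    rw [div_le_div_iff₀ (by positivity) (by positivity)]
    exact_mod_cast factorial_two_mul_add_mul_factorial_le s k
  have hnum : Gamma ((s : ℝ) + 1 / 2) ≤ Gamma (1 / 2) * s ! := by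
    rw [add_comm]; exact Gamma_add_nat_le_mul_factorial (by norm_num) (by norm_num) s
  have hden : Gamma ((d : ℝ) / 2) * (s + k)! ≤ Gamma ((s : ℝ) + k + (d : ℝ) / 2) := by
    have h := Gamma_mul_factorial_le_Gamma_add_nat hd2 (s + k)
    rwa [show (d : ℝ) / 2 + ((s + k : ℕ) : ℝ) = s + k + (d : ℝ) / 2 by push_cast; ring] at h
  have hratio : ((2 * s + k)! : ℝ) / (2 * s)! *
      (Gamma ((s : ℝ) + 1 / 2) / Gamma ((s : ℝ) + k + (d : ℝ) / 2)) ≤ 2 ^ k * gammaRatio d :=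
    calc _ ≤ 2 ^ k * (s + k)! / s ! *
          (Gamma (1 / 2) * s ! / (Gamma ((d : ℝ) / 2) * (s + k)!)) := by gcongr
      _ = 2 ^ k * gammaRatio d := by rw [gammaRatio]; field_simp
  calc lamTerm d b k α s = powCoef b α (2 * s + k) * (((2 * s + k)! : ℝ) / (2 * s)! *
        (Gamma ((s : ℝ) + 1 / 2) / Gamma ((s : ℝ) + k + (d : ℝ) / 2))) := by
        rw [lamTerm, mul_assoc]
    _ ≤ powCoef b α (2 * s + k) * (2 ^ k * gammaRatio d) := by
        gcongr; exact powCoef_nonneg hb0 _ _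
    _ = _ := by ring

lemma le_lamTerm_zero (hd : 2 ≤ d) (hb0 : ∀ m, 0 ≤ b m) (k α : ℕ) :
    powCoef b α k * gammaRatio d * (2 / d) ^ k ≤ lamTerm d b k α 0 := by
  have hd2 : (1 : ℝ) ≤ (d : ℝ) / 2 := by
    rw [le_div_iff₀ two_pos]; exact_mod_cast (by omega : 1 * 2 ≤ d)
  have hGd := Gamma_pos_of_pos (by linarith : (0 : ℝ) < (d : ℝ) / 2)
  have hGk : Gamma ((k : ℝ) + (d : ℝ) / 2) ≤ Gamma ((d : ℝ) / 2) * ((d : ℝ) / 2) ^ k * k ! := by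
    rw [add_comm]; exact Gamma_add_nat_le_pow_mul_factorial hd2 k
  have hGk0 := Gamma_pos_of_pos (by positivity : (0 : ℝ) < (k : ℝ) + (d : ℝ) / 2)
  have hG := Gamma_pos_of_pos (by norm_num : (0 : ℝ) < 1 / 2)
  have hterm : lamTerm d b k α 0 =
      powCoef b α k * (k ! * Gamma (1 / 2) / Gamma (k + (d : ℝ) / 2)) := by
    simp only [lamTerm]
    push_cast
    ring_nf
  rw [hterm, mul_assoc]
  gcongr
  · exact powCoef_nonneg hb0 α k
  calc gammaRatio d * (2 / d) ^ k
      = k ! * Gamma (1 / 2) / (Gamma ((d : ℝ) / 2) * ((d : ℝ) / 2) ^ k * k !) := by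
        rw [gammaRatio, div_pow, div_pow]
        field_simp
    _ ≤ k ! * Gamma (1 / 2) / Gamma (k + (d : ℝ) / 2) := by gcongr

lemma lamTerm_le_geometric (hd : 2 ≤ d) (hb0 : ∀ m, 0 ≤ b m) {A ρ : ℝ} {α : ℕ}
    (hA : ∀ m, powCoef b α m ≤ A * ρ ^ m) (k s : ℕ) :
    lamTerm d b k α s ≤ 2 ^ k * gammaRatio d * A * ρ ^ k * (ρ ^ 2) ^ s := by
  have := gammaRatio_pos hd
  calc lamTerm d b k α s ≤ 2 ^ k * gammaRatio d * powCoef b α (2 * s + k) :=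
        lamTerm_le hd hb0 k α s
    _ ≤ 2 ^ k * gammaRatio d * (A * ρ ^ (2 * s + k)) := by gcongr; exact hA _
    _ = _ := by ring

lemma summable_lamTerm (hd : 2 ≤ d) (hb0 : ∀ m, 0 ≤ b m) {A ρ : ℝ} (hρ0 : 0 ≤ ρ) (hρ1 : ρ < 1)
    {α : ℕ} (hA : ∀ m, powCoef b α m ≤ A * ρ ^ m) (k : ℕ) : Summable (lamTerm d b k α) :=
  .of_nonneg_of_le (lamTerm_nonneg hb0 k α) (lamTerm_le_geometric hd hb0 hA k)
    ((summable_geometric_of_lt_one (by positivity) (by nlinarith)).mul_left _)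

lemma exists_lamCoef_le (hd : 2 ≤ d) (hb0 : ∀ m, 0 ≤ b m) {A ρ : ℝ} (hρ0 : 0 ≤ ρ) (hρ1 : ρ < 1)
    {α : ℕ} (hA : ∀ m, powCoef b α m ≤ A * ρ ^ m) : ∃ Λ, ∀ k, lamCoef d b k α ≤ Λ * ρ ^ k := by
  have hρ2 : ρ ^ 2 < 1 := by nlinarith
  refine ⟨lamPrefactor d / 2 * gammaRatio d * A * (1 - ρ ^ 2)⁻¹, fun k => ?_⟩
  have := lamPrefactor_pos hd
  calc lamCoef d b k α
      ≤ lamPrefactor d / 2 ^ (k + 1) *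
          ∑' s : ℕ, 2 ^ k * gammaRatio d * A * ρ ^ k * (ρ ^ 2) ^ s := by
        rw [lamCoef_eq]
        refine mul_le_mul_of_nonneg_left ?_ (by positivity)
        exact Summable.tsum_le_tsum (lamTerm_le_geometric hd hb0 hA k)
          (summable_lamTerm hd hb0 hρ0 hρ1 hA k)
          ((summable_geometric_of_lt_one (by positivity) hρ2).mul_left _)
    _ = _ := by
        rw [tsum_mul_left, tsum_geometric_of_lt_one (by positivity) hρ2, pow_succ]
        field_simp

lemma le_lamCoef (hd : 2 ≤ d) (hb0 : ∀ m, 0 ≤ b m) {k α : ℕ} (hsum : Summable (lamTerm d b k α)) :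
    lamPrefactor d / 2 * gammaRatio d * powCoef b α k * (1 / d) ^ k ≤ lamCoef d b k α := by
  have := lamPrefactor_pos hd
  calc _ = lamPrefactor d / 2 ^ (k + 1) * (powCoef b α k * gammaRatio d * (2 / d) ^ k) := by
        rw [pow_succ, div_pow, div_pow, one_pow]; field_simp
    _ ≤ lamPrefactor d / 2 ^ (k + 1) * lamTerm d b k α 0 := by
        gcongr; exact le_lamTerm_zero hd hb0 k α
    _ ≤ lamCoef d b k α := by
        rw [lamCoef_eq]
        gcongr
        exact hsum.le_tsum 0 fun s _ => lamTerm_nonneg hb0 k α s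

end lamCoef

lemma card_support_le_sum {n : ℕ} (t : Fin n → ℕ) : #{i | t i ≠ 0} ≤ ∑ i, t i :=
  calc #{i | t i ≠ 0} = ∑ i with t i ≠ 0, 1 := card_eq_sum_ones _
    _ ≤ ∑ i with t i ≠ 0, t i := sum_le_sum fun _ hi => Nat.one_le_iff_ne_zero.2 (mem_filter.1 hi).2
    _ ≤ ∑ i, t i := sum_le_sum_of_subset (filter_subset _ _)

section muCoef

variable {d n D : ℕ} {b a : ℕ → ℝ}

lemma muCoef_eq_sum (haD : ∀ q, D < q → a q = 0) (k : Fin n → ℕ) :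
    muCoef d n b a k = ∑ q ∈ range (D + 1), a q * ∑ t ∈ Nat.antidiagonalTuple n q,
      (Nat.multinomial univ t : ℝ) * ∏ i, lamCoef d b (k i) (t i) :=
  tsum_eq_sum fun q hq => by rw [haD q (by simpa using hq), zero_mul]

lemma muCoef_le {Λ ρ : ℝ} (hlam0 : ∀ k α, 0 ≤ lamCoef d b k α)
    (hlam : ∀ k α, α ≤ D → lamCoef d b k α ≤ Λ * ρ ^ k)
    (ha0 : ∀ q, 0 ≤ a q) (haD : ∀ q, D < q → a q = 0) (k : Fin n → ℕ) :
    muCoef d n b a k ≤ (∑ q ∈ range (D + 1), a q * ∑ t ∈ Nat.antidiagonalTuple n q,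
      (Nat.multinomial univ t : ℝ)) * (Λ ^ n * ρ ^ ∑ i, k i) := by
  rw [muCoef_eq_sum haD, sum_mul]
  refine sum_le_sum fun q hq => ?_
  rw [mul_assoc, sum_mul]
  refine mul_le_mul_of_nonneg_left (sum_le_sum fun t ht => ?_) (ha0 q)
  refine mul_le_mul_of_nonneg_left ?_ (by positivity)
  have htD : ∀ i, t i ≤ D := fun i =>
    (le_of_mem_antidiagonalTuple ht i).trans (Nat.lt_succ_iff.1 (mem_range.1 hq))
  calc ∏ i, lamCoef d b (k i) (t i) ≤ ∏ i, Λ * ρ ^ k i :=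
        prod_le_prod (fun i _ => hlam0 _ _) fun i _ => hlam _ _ (htD i)
    _ = Λ ^ n * ρ ^ ∑ i, k i := by simp [prod_mul_distrib, prod_pow_eq_pow_sum]

lemma muCoef_eq_zero_of_lt_card_support (haD : ∀ q, D < q → a q = 0) (k : Fin n → ℕ)
    (hk : D < #{i | k i ≠ 0}) : muCoef d n b a k = 0 := by
  rw [muCoef_eq_sum haD]
  refine sum_eq_zero fun q hq => mul_eq_zero_of_right _ (sum_eq_zero fun t ht => ?_)
  obtain ⟨j, hkj, htj⟩ : ∃ j, k j ≠ 0 ∧ t j = 0 := by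
    by_contra! h
    have hsub : #{i | k i ≠ 0} ≤ #{i | t i ≠ 0} :=
      card_le_card fun i hi => by simp only [mem_filter, mem_univ, true_and] at hi ⊢; exact h i hi
    have hsum := card_support_le_sum t
    rw [Nat.mem_antidiagonalTuple.1 ht] at hsum
    have := mem_range.1 hq
    omega
  refine mul_eq_zero_of_right _ (prod_eq_zero (mem_univ j) ?_)
  rw [htj]
  exact lamCoef_zero_right b hkj

lemma le_muCoef {μ₀ σ : ℝ} (hlam0 : ∀ k α, 0 ≤ lamCoef d b k α)
    (hlam : ∀ k α, α ≤ D → (α = 0 → k = 0) → μ₀ * σ ^ k ≤ lamCoef d b k α)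
    (hμ₀ : 0 ≤ μ₀) (hσ : 0 ≤ σ) (ha0 : ∀ q, 0 ≤ a q) (haD : ∀ q, D < q → a q = 0)
    {S : Finset (Fin n)} (hS : #S ≤ D) (i₀ : Fin n) (k : Fin n → ℕ) (hk : ∀ i ∉ S, k i = 0) :
    a D * (μ₀ ^ n * σ ^ ∑ i, k i) ≤ muCoef d n b a k := by
  -- A degree-`D` multi-index that is positive on `S`, so that `λ_{kᵢ, t₀ i}` never hits the
  -- vanishing `λ_{k,0}` with `k ≠ 0`.
  set t₀ : Fin n → ℕ := fun i => (if i ∈ S then 1 else 0) + (if i = i₀ then D - #S else 0)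
  have ht : t₀ ∈ Nat.antidiagonalTuple n D := by
    rw [Nat.mem_antidiagonalTuple]
    simp only [t₀, sum_add_distrib, sum_boole, sum_ite_eq', mem_univ, if_true]
    simp only [filter_mem_eq_inter, univ_inter, Nat.cast_id]
    omega
  have hprod : μ₀ ^ n * σ ^ ∑ i, k i ≤ ∏ i, lamCoef d b (k i) (t₀ i) :=
    calc μ₀ ^ n * σ ^ ∑ i, k i = ∏ i, μ₀ * σ ^ k i := by
          simp [prod_mul_distrib, prod_pow_eq_pow_sum]
      _ ≤ _ := prod_le_prod (fun i _ => by positivity) fun i _ =>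
          hlam _ _ (le_of_mem_antidiagonalTuple ht i) fun hti =>
            hk i fun hi => by simp [t₀, hi] at hti
  have hnonneg : ∀ t : Fin n → ℕ, 0 ≤ (Nat.multinomial univ t : ℝ) * ∏ i, lamCoef d b (k i) (t i) :=
    fun t => mul_nonneg (Nat.cast_nonneg _) (prod_nonneg fun i _ => hlam0 _ _)
  have hterm : μ₀ ^ n * σ ^ ∑ i, k i ≤ ∑ t ∈ Nat.antidiagonalTuple n D,
      (Nat.multinomial univ t : ℝ) * ∏ i, lamCoef d b (k i) (t i) :=
    calc _ ≤ (Nat.multinomial univ t₀ : ℝ) * ∏ i, lamCoef d b (k i) (t₀ i) :=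
          hprod.trans (le_mul_of_one_le_left (prod_nonneg fun i _ => hlam0 _ _)
            (by exact_mod_cast Nat.multinomial_pos _ _))
      _ ≤ _ := single_le_sum (f := fun t => (Nat.multinomial univ t : ℝ) *
          ∏ i, lamCoef d b (k i) (t i)) (fun t _ => hnonneg t) ht
  rw [muCoef_eq_sum haD]
  exact (mul_le_mul_of_nonneg_left hterm (ha0 D)).trans <|
    single_le_sum (f := fun q => a q * ∑ t ∈ Nat.antidiagonalTuple n q,
      (Nat.multinomial univ t : ℝ) * ∏ i, lamCoef d b (k i) (t i))
      (fun q _ => mul_nonneg (ha0 q) (sum_nonneg fun t _ => hnonneg t)) (self_mem_range_succ D)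

end muCoef

section geometricCoefficients

variable {d n D : ℕ} {b a : ℕ → ℝ} {r c₁ c₂ : ℝ}

lemma exists_forall_lamCoef_le (hd : 2 ≤ d) (hr0 : 0 < r) (hr1 : r < 1)
    (hb0 : ∀ m, 0 ≤ b m) (hb : ∀ m, b m ≤ c₁ * r ^ m) (D : ℕ) :
    ∃ Λ, ∀ k α, α ≤ D → lamCoef d b k α ≤ Λ * √r ^ k := by
  have hΛ : ∀ α, ∃ Λ, ∀ k, lamCoef d b k α ≤ Λ * √r ^ k := fun α =>
    have ⟨_, hA⟩ := exists_powCoef_le_mul_sqrt_pow hr0 hr1 hb0 hb α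
    exists_lamCoef_le hd hb0 (sqrt_nonneg r) ((sqrt_lt' one_pos).2 (by simpa using hr1)) hA
  choose Λ hΛ using hΛ
  obtain ⟨Λ', hΛ'⟩ := ((range (D + 1)).image Λ).exists_le
  exact ⟨Λ', fun k α hα => (hΛ α k).trans <| by
    gcongr; exact hΛ' _ (mem_image_of_mem Λ (mem_range.2 (Nat.lt_succ_of_le hα)))⟩

lemma exists_forall_le_lamCoef (hd : 2 ≤ d) (hr0 : 0 < r) (hr1 : r < 1) (hc₂ : 0 < c₂)
    (hb : ∀ m, c₂ * r ^ m ≤ b m ∧ b m ≤ c₁ * r ^ m) (D : ℕ) :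
    ∃ μ₀ > 0, ∀ k α, α ≤ D → (α = 0 → k = 0) → μ₀ * (r / d) ^ k ≤ lamCoef d b k α := by
  have hb0 : ∀ m, 0 ≤ b m := fun m => (by positivity : 0 ≤ c₂ * r ^ m).trans (hb m).1
  have hsum : ∀ k α, Summable (lamTerm d b k α) := fun k α =>
    have ⟨_, hA⟩ := exists_powCoef_le_mul_sqrt_pow hr0 hr1 hb0 (fun m => (hb m).2) α
    summable_lamTerm hd hb0 (sqrt_nonneg r) ((sqrt_lt' one_pos).2 (by simpa using hr1)) hA k
  have := lamPrefactor_pos hd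
  have := gammaRatio_pos hd
  set κ := lamPrefactor d / 2 * gammaRatio d
  refine ⟨min (κ * min c₂ 1 ^ D) (lamCoef d b 0 0),
    lt_min (by positivity) (lamCoef_zero_zero_pos hd b), fun k α hαD hα => ?_⟩
  rcases Nat.eq_zero_or_pos α with rfl | hα0
  · rw [hα rfl, pow_zero, mul_one]
    exact min_le_right _ _
  have hc : min c₂ 1 ^ D ≤ c₂ ^ α :=
    (pow_le_pow_of_le_one (by positivity) (min_le_right _ _) hαD).trans
      (pow_le_pow_left₀ (by positivity) (min_le_left _ _) α)
  calc min (κ * min c₂ 1 ^ D) (lamCoef d b 0 0) * (r / d) ^ k ≤ κ * c₂ ^ α * (r / d) ^ k := by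
        gcongr
        exact (min_le_left _ _).trans (by gcongr)
    _ = κ * (c₂ ^ α * r ^ k) * (1 / d) ^ k := by rw [div_eq_mul_one_div r, mul_pow]; ring
    _ ≤ κ * powCoef b α k * (1 / d) ^ k := by
        gcongr
        exact powCoef_ge hc₂.le hr0.le (fun m => (hb m).1) hα0.ne' k
    _ ≤ lamCoef d b k α := le_lamCoef hd hb0 (hsum k α)

lemma exists_muCoef_le (hd : 2 ≤ d) (hr0 : 0 < r) (hr1 : r < 1)
    (hb0 : ∀ m, 0 ≤ b m) (hb : ∀ m, b m ≤ c₁ * r ^ m)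
    (ha0 : ∀ q, 0 ≤ a q) (haD : ∀ q, D < q → a q = 0) :
    ∃ B > 0, ∃ ρ, 0 < ρ ∧ ρ < 1 ∧ ∀ k : Fin n → ℕ, muCoef d n b a k ≤ B * ρ ^ ∑ i, k i := by
  obtain ⟨Λ, hΛ⟩ := exists_forall_lamCoef_le hd hr0 hr1 hb0 hb D
  set B := (∑ q ∈ range (D + 1), a q * ∑ t ∈ Nat.antidiagonalTuple n q,
    (Nat.multinomial univ t : ℝ)) * Λ ^ n
  refine ⟨max B 1, by positivity, √r, sqrt_pos.2 hr0, (sqrt_lt' one_pos).2 (by simpa using hr1),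
    fun k => ?_⟩
  calc muCoef d n b a k ≤ B * √r ^ ∑ i, k i := by
        rw [mul_assoc]; exact muCoef_le (lamCoef_nonneg hd hb0) hΛ ha0 haD k
    _ ≤ max B 1 * √r ^ ∑ i, k i := by gcongr; exact le_max_left _ _

lemma exists_le_muCoef (hd : 2 ≤ d) (hr0 : 0 < r) (hr1 : r < 1) (hc₂ : 0 < c₂)
    (hb : ∀ m, c₂ * r ^ m ≤ b m ∧ b m ≤ c₁ * r ^ m)
    (ha0 : ∀ q, 0 ≤ a q) (haD : ∀ q, D < q → a q = 0) (haD_ne : a D ≠ 0)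
    {S : Finset (Fin n)} (hS : #S ≤ D) (i₀ : Fin n) :
    ∃ β > 0, ∃ σ, 0 < σ ∧ σ < 1 ∧
      ∀ k : Fin n → ℕ, (∀ i ∉ S, k i = 0) → β * σ ^ ∑ i, k i ≤ muCoef d n b a k := by
  have hb0 : ∀ m, 0 ≤ b m := fun m => (by positivity : 0 ≤ c₂ * r ^ m).trans (hb m).1
  have hdR : (2 : ℝ) ≤ d := by exact_mod_cast hd
  obtain ⟨μ₀, hμ₀, hlam⟩ := exists_forall_le_lamCoef hd hr0 hr1 hc₂ hb D
  refine ⟨a D * μ₀ ^ n, mul_pos ((ha0 D).lt_of_ne' haD_ne) (by positivity), r / d,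
    by positivity, (div_lt_one (by positivity)).2 (by linarith), fun k hk => ?_⟩
  rw [mul_assoc]
  exact le_muCoef (lamCoef_nonneg hd hb0) hlam hμ₀.le (by positivity) ha0 haD hS i₀ k hk

end geometricCoefficients

lemma alphaDim_add_two_add_two (j m : ℕ) :
    alphaDim (j + 2) (m + 2) = (m + 1 + j).choose j + (m + 2 + j).choose j := by
  rw [alphaDim, if_neg (by omega), if_neg (by omega),
    show j + 2 + (m + 2) - 1 = m + 2 + j + 1 by omega,
    show j + 2 + (m + 2) - 3 = m + 1 + j by omega, show m + 2 - 2 = m by omega]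
  have h₁ : (m + 2 + j + 1).choose (m + 2) =
      (m + 2 + j).choose (m + 1) + (m + 2 + j).choose (m + 2) := Nat.choose_succ_succ' _ _
  have h₂ : (m + 2 + j).choose (m + 1) = (m + 1 + j).choose m + (m + 1 + j).choose (m + 1) := by
    rw [show m + 2 + j = m + 1 + j + 1 by omega]; exact Nat.choose_succ_succ' _ _
  have e₁ : (m + 1 + j).choose (m + 1) = (m + 1 + j).choose j := Nat.choose_symm_add
  have e₂ : (m + 2 + j).choose (m + 2) = (m + 2 + j).choose j := Nat.choose_symm_add
  omega

lemma choose_le_alphaDim (j m : ℕ) : (m + j).choose j ≤ alphaDim (j + 2) m := by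
  match m with
  | 0 => simp [alphaDim]
  | 1 => simp [alphaDim, add_comm 1 j]
  | m + 2 => rw [alphaDim_add_two_add_two]; omega

lemma alphaDim_le_two_mul_choose (j m : ℕ) : alphaDim (j + 2) m ≤ 2 * (m + j).choose j := by
  match m with
  | 0 => simp [alphaDim]
  | 1 => simp [alphaDim, add_comm 1 j]; omega
  | m + 2 =>
    rw [alphaDim_add_two_add_two]
    have := Nat.choose_le_choose j (by omega : m + 1 + j ≤ m + 2 + j)
    omega

/-- The indices `(k, l)`, `1 ≤ l ≤ α_{k,d}`, of the spherical harmonics of degree `k ≤ K`. -/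
def modes (d K : ℕ) : Finset (ℕ × ℕ) :=
  (range (K + 1)).biUnion fun k => {k} ×ˢ Icc 1 (alphaDim d k)

lemma mem_modes {d K : ℕ} {p : ℕ × ℕ} :
    p ∈ modes d K ↔ p.1 ≤ K ∧ 1 ≤ p.2 ∧ p.2 ≤ alphaDim d p.1 := by
  obtain ⟨k, l⟩ := p
  simp [modes]

lemma card_modes (d K : ℕ) : #(modes d K) = ∑ k ∈ range (K + 1), alphaDim d k := by
  rw [modes, card_biUnion fun k _ k' _ hkk' => disjoint_left.2 fun p hp hp' => hkk' <| by
    simp only [mem_product, mem_singleton] at hp hp'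
    rw [← hp.1, ← hp'.1]]
  simp

lemma one_le_card_modes (d K : ℕ) : 1 ≤ #(modes d K) :=
  card_pos.2 ⟨(0, 1), mem_modes.2 ⟨Nat.zero_le K, le_rfl, by simp [alphaDim]⟩⟩

lemma card_modes_le {d : ℕ} (hd : 2 ≤ d) (K : ℕ) : #(modes d K) ≤ 2 * (K + 1) ^ (d - 1) := by
  obtain ⟨j, rfl⟩ : ∃ j, d = j + 2 := ⟨d - 2, by omega⟩
  calc #(modes (j + 2) K) ≤ ∑ m ∈ range (K + 1), 2 * (m + j).choose j := by
        rw [card_modes]; exact sum_le_sum fun m _ => alphaDim_le_two_mul_choose j m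
    _ = 2 * (K + (j + 1)).choose (j + 1) := by rw [← mul_sum, Nat.sum_range_add_choose, add_assoc]
    _ ≤ 2 * (K + 1) ^ (j + 2 - 1) := by gcongr; exact Nat.choose_add_le_add_one_pow K (j + 1)

lemma pow_div_factorial_le_card_modes {d : ℕ} (hd : 2 ≤ d) (K : ℕ) :
    ((K : ℝ) + 1) ^ (d - 1) / (d - 1)! ≤ #(modes d K) := by
  obtain ⟨j, rfl⟩ : ∃ j, d = j + 2 := ⟨d - 2, by omega⟩
  have hchoose : (K + j + 1).choose (j + 1) ≤ #(modes (j + 2) K) := by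
    rw [card_modes, ← Nat.sum_range_add_choose]
    exact sum_le_sum fun m _ => choose_le_alphaDim j m
  calc ((K : ℝ) + 1) ^ (j + 2 - 1) / (j + 2 - 1)!
      = (((K + j + 1 + 1 - (j + 1) : ℕ) : ℝ) ^ (j + 1)) / (j + 1)! := by
        rw [show K + j + 1 + 1 - (j + 1) = K + 1 by omega, show j + 2 - 1 = j + 1 by omega]
        push_cast; ring
    _ ≤ (K + j + 1).choose (j + 1) := Nat.pow_le_choose (j + 1) (K + j + 1)
    _ ≤ #(modes (j + 2) K) := by exact_mod_cast hchoose

def modeBox {n : ℕ} (d K : ℕ) (S : Finset (Fin n)) : Finset ((Fin n → ℕ) × (Fin n → ℕ)) :=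
  (Fintype.piFinset fun i => if i ∈ S then modes d K else {(0, 1)}).map
    (Equiv.arrowProdEquivProdArrow _ _ _).toEmbedding

section modeBox

variable {n d K : ℕ}

lemma mem_modeBox {S : Finset (Fin n)} {p : (Fin n → ℕ) × (Fin n → ℕ)} :
    p ∈ modeBox d K S ↔ ∀ i, (p.1 i, p.2 i) ∈ if i ∈ S then modes d K else {(0, 1)} := by
  simp [modeBox, mem_map_equiv]

lemma of_mem_modeBox {S : Finset (Fin n)} {p : (Fin n → ℕ) × (Fin n → ℕ)}
    (hp : p ∈ modeBox d K S) (i : Fin n) :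
    (p.1 i ≤ K ∧ 1 ≤ p.2 i ∧ p.2 i ≤ alphaDim d (p.1 i)) ∧ (i ∉ S → p.1 i = 0) := by
  have := mem_modeBox.1 hp i
  split_ifs at this with hi
  · exact ⟨mem_modes.1 this, fun h => (h hi).elim⟩
  · simp only [mem_singleton, Prod.mk.injEq] at this
    simp [this, alphaDim]

lemma card_modeBox (S : Finset (Fin n)) : #(modeBox d K S) = #(modes d K) ^ #S := by
  simp [modeBox, apply_ite, prod_ite_mem]

lemma finite_and_ncard_le_of_forall_mem {m : ℕ} {E : Set ((Fin n → ℕ) × (Fin n → ℕ))}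
    (hE : ∀ p ∈ E, (∀ i, p.1 i ≤ K ∧ 1 ≤ p.2 i ∧ p.2 i ≤ alphaDim d (p.1 i)) ∧
      #{i | p.1 i ≠ 0} ≤ m) :
    E.Finite ∧ E.ncard ≤ 2 ^ n * #(modes d K) ^ m := by
  set U := {S ∈ (univ : Finset (Fin n)).powerset | #S ≤ m}.biUnion (modeBox d K)
  have hsub : E ⊆ U := by
    intro p hp
    obtain ⟨hbox, hsupp⟩ := hE p hp
    simp only [U, coe_biUnion, coe_filter, mem_powerset, subset_univ, true_and, Set.mem_iUnion,
      mem_coe]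
    refine ⟨({i | p.1 i ≠ 0} : Finset (Fin n)), hsupp, mem_modeBox.2 fun i => ?_⟩
    split_ifs with hi
    · exact mem_modes.2 (hbox i)
    · have hi : p.1 i = 0 := by simpa using hi
      have := hbox i
      simp only [hi, alphaDim, if_true] at this
      simp [hi, le_antisymm this.2.2 this.2.1]
  refine ⟨U.finite_toSet.subset hsub, ?_⟩
  calc E.ncard ≤ #U := by simpa using Set.ncard_le_ncard hsub U.finite_toSet
    _ ≤ ∑ S ∈ {S ∈ (univ : Finset (Fin n)).powerset | #S ≤ m}, #(modeBox d K S) := card_biUnion_le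
    _ ≤ ∑ S ∈ {S ∈ (univ : Finset (Fin n)).powerset | #S ≤ m}, #(modes d K) ^ m :=
        sum_le_sum fun S hS => card_modeBox (d := d) (K := K) S ▸
          Nat.pow_le_pow_right (one_le_card_modes d K) (mem_filter.1 hS).2
    _ ≤ 2 ^ n * #(modes d K) ^ m := by
        rw [sum_const, smul_eq_mul]
        gcongr
        simpa using card_filter_le (univ : Finset (Fin n)).powerset _

end modeBox

lemma le_mul_pow_iff_le_floor {lam B ρ : ℝ} (hlam : 0 < lam) (hlamB : lam ≤ B) (hρ0 : 0 < ρ)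
    (hρ1 : ρ < 1) (k : ℕ) : lam ≤ B * ρ ^ k ↔ k ≤ ⌊log (B / lam) / log ρ⁻¹⌋₊ := by
  have hB : 0 < B := hlam.trans_le hlamB
  have ht : 0 < log ρ⁻¹ := log_pos ((one_lt_inv₀ hρ0).2 hρ1)
  have hL : 0 ≤ log (B / lam) / log ρ⁻¹ :=
    div_nonneg (log_nonneg ((le_div_iff₀ hlam).2 (by simpa using hlamB))) ht.le
  rw [Nat.le_floor_iff hL, le_div_iff₀ ht, ← log_le_log_iff hlam (by positivity),
    log_mul hB.ne' (by positivity), log_pow, log_div hB.ne' hlam.ne', log_inv]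
  constructor <;> intro h <;> linarith

section eigSet

variable {d n D : ℕ} {b a : ℕ → ℝ} {r c₁ c₂ : ℝ}

lemma forall_mem_eigSet_of_muCoef_le (haD : ∀ q, D < q → a q = 0) {B ρ lam : ℝ} (hlam : 0 < lam)
    (hlamB : lam ≤ B) (hρ0 : 0 < ρ) (hρ1 : ρ < 1)
    (hμ : ∀ k : Fin n → ℕ, muCoef d n b a k ≤ B * ρ ^ ∑ i, k i) :
    ∀ p ∈ eigSet d n b a lam, (∀ i, p.1 i ≤ ⌊log (B / lam) / log ρ⁻¹⌋₊ ∧ 1 ≤ p.2 i ∧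
      p.2 i ≤ alphaDim d (p.1 i)) ∧ #{i | p.1 i ≠ 0} ≤ min D n := by
  rintro p ⟨hmodes, hlamμ⟩
  refine ⟨fun i => ⟨(le_mul_pow_iff_le_floor hlam hlamB hρ0 hρ1 _).1 ?_, hmodes i⟩,
    le_min ?_ ((card_filter_le _ _).trans (by simp))⟩
  · refine hlamμ.trans ((hμ p.1).trans (mul_le_mul_of_nonneg_left ?_ (hlam.le.trans hlamB)))
    exact pow_le_pow_of_le_one hρ0.le hρ1.le
      (single_le_sum (fun j _ => Nat.zero_le _) (mem_univ i))
  · by_contra h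
    rw [muCoef_eq_zero_of_lt_card_support haD p.1 (not_le.1 h)] at hlamμ
    linarith

lemma modeBox_subset_eigSet (hn : n ≠ 0) {S : Finset (Fin n)} {β σ lam : ℝ} (hlam : 0 < lam)
    (hlamβ : lam ≤ β) (hσ0 : 0 < σ) (hσ1 : σ < 1)
    (hμ : ∀ k : Fin n → ℕ, (∀ i ∉ S, k i = 0) → β * σ ^ ∑ i, k i ≤ muCoef d n b a k) :
    (modeBox d ⌊log (β / lam) / log (σ ^ n)⁻¹⌋₊ S : Set _) ⊆ eigSet d n b a lam := by
  intro p hp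
  have hp' := of_mem_modeBox (mem_coe.1 hp)
  refine ⟨fun i => (hp' i).1.2, ?_⟩
  calc lam ≤ β * (σ ^ n) ^ ⌊log (β / lam) / log (σ ^ n)⁻¹⌋₊ :=
        (le_mul_pow_iff_le_floor hlam hlamβ (by positivity) (pow_lt_one₀ hσ0.le hσ1 hn) _).2 le_rfl
    _ ≤ β * σ ^ ∑ i, p.1 i := by
        rw [← pow_mul]
        refine mul_le_mul_of_nonneg_left (pow_le_pow_of_le_one hσ0.le hσ1.le ?_)
          (hlam.le.trans hlamβ)
        simpa using sum_le_sum fun i (_ : i ∈ univ) => (hp' i).1.1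
    _ ≤ muCoef d n b a p.1 := hμ p.1 fun i hi => (hp' i).2 hi

lemma exists_ncard_eigSet_le (hd : 2 ≤ d) (hr0 : 0 < r) (hr1 : r < 1)
    (hb0 : ∀ m, 0 ≤ b m) (hb : ∀ m, b m ≤ c₁ * r ^ m)
    (ha0 : ∀ q, 0 ≤ a q) (haD : ∀ q, D < q → a q = 0) :
    ∃ C C' lam0 : ℝ, 0 < C ∧ 0 < C' ∧ 0 < lam0 ∧ ∀ lam, 0 < lam → lam ≤ lam0 →
      (eigSet d n b a lam).Finite ∧
      ((eigSet d n b a lam).ncard : ℝ) ≤ C * log (C' / lam) ^ ((d - 1) * min D n) := by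
  obtain ⟨B, hB, ρ, hρ0, hρ1, hμ⟩ := exists_muCoef_le (n := n) hd hr0 hr1 hb0 hb ha0 haD
  have ht : 0 < log ρ⁻¹ := log_pos ((one_lt_inv₀ hρ0).2 hρ1)
  refine ⟨2 ^ n * (2 * (2 / log ρ⁻¹) ^ (d - 1)) ^ min D n, B, B * ρ, by positivity, hB,
    by positivity, fun lam hlam hlam0 => ?_⟩
  have hlamB : lam ≤ B := hlam0.trans (mul_le_of_le_one_right hB.le hρ1.le)
  set K := ⌊log (B / lam) / log ρ⁻¹⌋₊
  obtain ⟨hfin, hcard⟩ := finite_and_ncard_le_of_forall_mem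
    (forall_mem_eigSet_of_muCoef_le haD hlam hlamB hρ0 hρ1 hμ)
  refine ⟨hfin, ?_⟩
  have hKL : (K : ℝ) + 1 ≤ 2 / log ρ⁻¹ * log (B / lam) := by
    have hK : (K : ℝ) ≤ log (B / lam) / log ρ⁻¹ := Nat.floor_le <|
      div_nonneg (log_nonneg ((le_div_iff₀ hlam).2 (by simpa using hlamB))) ht.le
    have hK1 : (1 : ℝ) ≤ K := by
      exact_mod_cast (le_mul_pow_iff_le_floor hlam hlamB hρ0 hρ1 1).1 (by simpa using hlam0)
    rw [div_mul_eq_mul_div, mul_div_assoc]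
    linarith
  calc ((eigSet d n b a lam).ncard : ℝ) ≤ 2 ^ n * #(modes d K) ^ min D n := by
        exact_mod_cast hcard
    _ ≤ 2 ^ n * (2 * ((K : ℝ) + 1) ^ (d - 1)) ^ min D n := by
        gcongr; exact_mod_cast card_modes_le hd K
    _ ≤ 2 ^ n * (2 * (2 / log ρ⁻¹ * log (B / lam)) ^ (d - 1)) ^ min D n := by gcongr
    _ = _ := by rw [mul_pow, mul_pow, mul_pow, ← pow_mul, ← pow_mul]; ring

lemma exists_le_ncard_eigSet (hd : 2 ≤ d) (hn : 1 ≤ n) (hr0 : 0 < r) (hr1 : r < 1) (hc₂ : 0 < c₂)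
    (hb : ∀ m, c₂ * r ^ m ≤ b m ∧ b m ≤ c₁ * r ^ m)
    (ha0 : ∀ q, 0 ≤ a q) (haD : ∀ q, D < q → a q = 0) (haD_ne : a D ≠ 0) :
    ∃ c c' lam0 : ℝ, 0 < c ∧ 0 < c' ∧ 0 < lam0 ∧ ∀ lam, 0 < lam → lam ≤ lam0 →
      (eigSet d n b a lam).Finite →
      c * log (c' / lam) ^ ((d - 1) * min D n) ≤ ((eigSet d n b a lam).ncard : ℝ) := by
  obtain ⟨S, -, hS⟩ := exists_subset_card_eq (s := (univ : Finset (Fin n))) (n := min D n)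
    (by simp)
  obtain ⟨β, hβ, σ, hσ0, hσ1, hμ⟩ :=
    exists_le_muCoef hd hr0 hr1 hc₂ hb ha0 haD haD_ne (hS ▸ min_le_left D n) ⟨0, hn⟩
  have ht : 0 < log (σ ^ n)⁻¹ :=
    log_pos ((one_lt_inv₀ (by positivity)).2 (pow_lt_one₀ hσ0.le hσ1 (by omega)))
  refine ⟨(1 / (log (σ ^ n)⁻¹ ^ (d - 1) * (d - 1)!)) ^ min D n, β, β, by positivity, hβ, hβ,
    fun lam hlam hlamβ hfin => ?_⟩
  set K := ⌊log (β / lam) / log (σ ^ n)⁻¹⌋₊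
  have hcard : #(modes d K) ^ min D n ≤ (eigSet d n b a lam).ncard := by
    rw [← hS, ← card_modeBox, ← Set.ncard_coe_finset]
    exact Set.ncard_le_ncard (modeBox_subset_eigSet (by omega) hlam hlamβ hσ0 hσ1 hμ) hfin
  have hL : 0 ≤ log (β / lam) / log (σ ^ n)⁻¹ :=
    div_nonneg (log_nonneg ((le_div_iff₀ hlam).2 (by simpa using hlamβ))) ht.le
  calc _ = ((log (β / lam) / log (σ ^ n)⁻¹) ^ (d - 1) / (d - 1)!) ^ min D n := by
        rw [pow_mul, ← mul_pow, div_pow]; ring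
    _ ≤ (((K : ℝ) + 1) ^ (d - 1) / (d - 1)!) ^ min D n := by
        gcongr; exact (Nat.lt_floor_add_one _).le
    _ ≤ (#(modes d K) : ℝ) ^ min D n := by gcongr; exact pow_div_factorial_le_card_modes hd K
    _ ≤ _ := by exact_mod_cast hcard

end eigSet

theorem stmt_5_general (d n : ℕ) (hd : 2 ≤ d) (hn : 1 ≤ n)
    (b a : ℕ → ℝ) (r c₁ c₂ : ℝ)
    (hr0 : 0 < r) (hr1 : r < 1) (hc2 : 0 < c₂)
    (hb : ∀ m : ℕ, c₂ * r ^ m ≤ b m ∧ b m ≤ c₁ * r ^ m)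
    (D : ℕ) (ha0 : ∀ q : ℕ, 0 ≤ a q)
    (haD : ∀ q : ℕ, D < q → a q = 0) (haDne : a D ≠ 0) :
    ∃ C C' c c' lam0 : ℝ, 0 < C ∧ 0 < C' ∧ 0 < c ∧ 0 < c' ∧ 0 < lam0 ∧
      ∀ lam : ℝ, 0 < lam → lam ≤ lam0 →
        (eigSet d n b a lam).Finite ∧
        c * Real.log (c' / lam) ^ ((d - 1) * min D n) ≤ ((eigSet d n b a lam).ncard : ℝ) ∧
        ((eigSet d n b a lam).ncard : ℝ) ≤ C * Real.log (C' / lam) ^ ((d - 1) * min D n) := by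
  have hb0 : ∀ m, 0 ≤ b m := fun m => (by positivity : 0 ≤ c₂ * r ^ m).trans (hb m).1
  obtain ⟨C, C', lam₀, hC, hC', hlam₀, hupper⟩ :=
    exists_ncard_eigSet_le (n := n) hd hr0 hr1 hb0 (fun m => (hb m).2) ha0 haD
  obtain ⟨c, c', lam₁, hc, hc', hlam₁, hlower⟩ :=
    exists_le_ncard_eigSet hd hn hr0 hr1 hc2 hb ha0 haD haDne
  refine ⟨C, C', c, c', min lam₀ lam₁, hC, hC', hc, hc', lt_min hlam₀ hlam₁, fun lam hlam hle => ?_⟩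
  obtain ⟨hfin, hup⟩ := hupper lam hlam (hle.trans (min_le_left _ _))
  exact ⟨hfin, hlower lam hlam (hle.trans (min_le_right _ _)) hfin, hup⟩

/-- Under the geometric bounds on `b` and with `g` a polynomial of degree
`D ≥ 1` with nonnegative coefficients, with `d* := min(D, n)`, there exist constants
`C, C', c, c', lam0 > 0` such that for all `0 < λ ≤ lam0` the set `E^λ` is finite and
`c (log(c'/λ))^{(d-1)d*} ≤ |E^λ| ≤ C (log(C'/λ))^{(d-1)d*}`. -/
theorem stmt_5 (d n : ℕ) (hd : 2 ≤ d) (hn : 1 ≤ n)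
    (b a : ℕ → ℝ) (r c₁ c₂ : ℝ)
    (hr0 : 0 < r) (hr1 : r < 1) (hc2 : 0 < c₂) (hcc : c₂ ≤ c₁)
    (hconv : ∀ x ∈ Set.Icc (-1 : ℝ) 1, Summable fun m : ℕ => b m * x ^ m)
    (hb : ∀ m : ℕ, c₂ * r ^ m ≤ b m ∧ b m ≤ c₁ * r ^ m)
    (D : ℕ) (hD : 1 ≤ D) (ha0 : ∀ q : ℕ, 0 ≤ a q)
    (haD : ∀ q : ℕ, D < q → a q = 0) (haDne : a D ≠ 0) :
    ∃ C C' c c' lam0 : ℝ, 0 < C ∧ 0 < C' ∧ 0 < c ∧ 0 < c' ∧ 0 < lam0 ∧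
      ∀ lam : ℝ, 0 < lam → lam ≤ lam0 →
        (eigSet d n b a lam).Finite ∧
        c * Real.log (c' / lam) ^ ((d - 1) * min D n) ≤ ((eigSet d n b a lam).ncard : ℝ) ∧
        ((eigSet d n b a lam).ncard : ℝ) ≤ C * Real.log (C' / lam) ^ ((d - 1) * min D n) :=
  stmt_5_general d n hd hn b a r c₁ c₂ hr0 hr1 hc2 hb D ha0 haD haDne
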